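/- arXiv:2512.20101 — 2 statements merged into one kernel-verified Lean document; each statement's English description precedes it below -/
import Mathlib

section
/- In a unital C*-algebra A, the set of extreme points of the closed unit ball is norm closed. -/
/-!
Extreme points of the unit ball are exactly the partial isometries `x` with
`(1 - x⋆x) A (1 - xx⋆) = 0`, and both conditions are closed in norm.
If `x` is extreme, the perturbations `x (1 ± (1 - x⋆x) / 2)` of norm at most one force
`x x⋆x = x`, and the perturbations `x ± d⋆` with `d = (1 - x⋆x) a (1 - xx⋆)` force `d = 0`.
Conversely, if `‖x ± u‖ ≤ 1` then `u⋆u ≤ 1 - x⋆x`, so `u x⋆x = 0`; dually `xx⋆ u = 0`, and then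
`u = (1 - xx⋆) u (1 - x⋆x)` vanishes by the corner condition.
-/

open Set

def unitBallExtremePoints (E : Type*) [SeminormedAddCommGroup E] [Module ℝ E] : Set E :=
  {x | ‖x‖ ≤ 1 ∧ ∀ y z : E, ‖y‖ ≤ 1 → ‖z‖ ≤ 1 → x = (2⁻¹ : ℝ) • (y + z) → y = x ∧ z = x}

theorem mem_unitBallExtremePoints_iff {E : Type*} [SeminormedAddCommGroup E] [Module ℝ E]
    {x : E} : x ∈ unitBallExtremePoints E ↔ ‖x‖ ≤ 1 ∧ ∀ u, ‖x + u‖ ≤ 1 → ‖x - u‖ ≤ 1 → u = 0 := by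
  refine and_congr_right fun _ => ⟨fun h u hadd hsub => ?_, fun h y z hy hz hyz => ?_⟩
  · have hmid : x = (2⁻¹ : ℝ) • ((x + u) + (x - u)) := by
      rw [add_add_sub_cancel, ← two_smul ℝ, smul_smul, inv_mul_cancel₀ two_ne_zero, one_smul]
    simpa using (h _ _ hadd hsub hmid).1
  · have hsum : y + z = x + x := by
      rw [hyz, ← two_smul ℝ, smul_smul, mul_inv_cancel₀ two_ne_zero, one_smul]
    have hz : z = x - (y - x) := by rw [sub_sub_eq_add_sub, ← hsum, add_sub_cancel_left]
    have hu := h (y - x) (by simpa using hy) (by rwa [← hz])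
    rw [sub_eq_zero] at hu
    exact ⟨hu, by rw [hz, hu, sub_self, sub_zero]⟩

def IsPartialIsometry {R : Type*} [Mul R] [Star R] (x : R) : Prop :=
  x * star x * x = x

namespace IsPartialIsometry

variable {R : Type*} [Monoid R] [StarMul R] {x : R}

protected theorem star (hx : IsPartialIsometry x) : IsPartialIsometry (star x) := by
  simpa [IsPartialIsometry, mul_assoc] using congr(star $hx)

theorem isStarProjection_star_mul_self (hx : IsPartialIsometry x) :
    IsStarProjection (star x * x) :=
  ⟨by rw [IsIdempotentElem, mul_assoc, ← mul_assoc x, hx], .star_mul_self x⟩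

end IsPartialIsometry

section CStarAlgebra

variable {A : Type*} [CStarAlgebra A] [PartialOrder A] [StarOrderedRing A]

theorem norm_le_one_iff_star_mul_self_le_one {x : A} : ‖x‖ ≤ 1 ↔ star x * x ≤ 1 := by
  rw [← CStarAlgebra.norm_le_one_iff_of_nonneg _ (star_mul_self_nonneg x),
    CStarRing.norm_star_mul_self, ← sq, sq_le_one_iff₀ (norm_nonneg x)]

theorem norm_le_one_iff_mul_star_self_le_one {x : A} : ‖x‖ ≤ 1 ↔ x * star x ≤ 1 := by
  simpa using norm_le_one_iff_star_mul_self_le_one (x := star x)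

theorem norm_add_le_one_of_star_mul_eq_zero {x v : A} (hxv : star x * v = 0)
    (h : star x * x + star v * v ≤ 1) : ‖x + v‖ ≤ 1 := by
  have hvx : star v * x = 0 := by simpa using congr(star $hxv)
  rw [norm_le_one_iff_star_mul_self_le_one, star_add, add_mul, mul_add, mul_add, hxv, hvx,
    add_zero, zero_add]
  exact h

theorem norm_mul_cfc_star_mul_self_le_one {x : A} (hx : ‖x‖ ≤ 1) {f : ℝ → ℝ}
    (hf : Continuous f) (hbound : ∀ t ∈ Icc (0 : ℝ) 1, t * f t ^ 2 ≤ 1) :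
    ‖x * cfc f (star x * x)‖ ≤ 1 := by
  have hspec : ∀ t ∈ spectrum ℝ (star x * x), t ∈ Icc (0 : ℝ) 1 := by
    have hle := (le_algebraMap_iff_spectrum_le (r := (1 : ℝ)) (a := star x * x)).mp
      (by rwa [map_one, ← norm_le_one_iff_star_mul_self_le_one])
    exact fun t ht => ⟨spectrum_nonneg_of_nonneg (star_mul_self_nonneg x) ht, hle t ht⟩
  have hstar : star (x * cfc f (star x * x)) * (x * cfc f (star x * x))
      = cfc (fun t => f t * t * f t) (star x * x) := by
    rw [star_mul, (cfc_predicate f (star x * x)).star_eq, ← mul_assoc, mul_assoc _ (star x),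
      cfc_mul _ _ (star x * x), cfc_mul _ _ (star x * x), cfc_id' ℝ (star x * x)]
  rw [← sq_le_one_iff₀ (norm_nonneg _), sq, ← CStarRing.norm_star_mul_self, hstar]
  refine norm_cfc_le zero_le_one fun t ht => ?_
  obtain ⟨ht₀, ht₁⟩ := hspec t ht
  rw [Real.norm_eq_abs, abs_le]
  constructor <;> nlinarith [hbound t ⟨ht₀, ht₁⟩, mul_nonneg ht₀ (sq_nonneg (f t))]

theorem IsStarProjection.mul_eq_zero_of_star_mul_self_le_one_sub {p u : A}
    (hp : IsStarProjection p) (h : star u * u ≤ 1 - p) : u * p = 0 := by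
  have hcomp := hp.isSelfAdjoint.conjugate_le_conjugate h
  rw [mul_sub, sub_mul, mul_one, hp.isIdempotentElem.eq, hp.isIdempotentElem.eq, sub_self,
    show p * (star u * u) * p = star (u * p) * (u * p) by
      rw [star_mul, hp.isSelfAdjoint.star_eq, mul_assoc, mul_assoc, mul_assoc]] at hcomp
  exact (CStarRing.star_mul_self_eq_zero_iff _).mp (hcomp.antisymm (star_mul_self_nonneg _))

namespace IsPartialIsometry

variable {x : A}

theorem mul_star_mul_self_eq_zero {u : A} (hx : IsPartialIsometry x) (hadd : ‖x + u‖ ≤ 1)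
    (hsub : ‖x - u‖ ≤ 1) : u * (star x * x) = 0 := by
  refine hx.isStarProjection_star_mul_self.mul_eq_zero_of_star_mul_self_le_one_sub ?_
  have hsum := add_le_add (norm_le_one_iff_star_mul_self_le_one.mp hadd)
    (norm_le_one_iff_star_mul_self_le_one.mp hsub)
  rw [star_add, star_sub, ← two_smul ℝ (1 : A), show (star x + star u) * (x + u)
    + (star x - star u) * (x - u) = (2 : ℝ) • (star x * x + star u * u) by
      rw [two_smul]; noncomm_ring, smul_le_smul_iff_of_pos_left two_pos] at hsum
  rwa [le_sub_iff_add_le']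

theorem mem_unitBallExtremePoints (hx : IsPartialIsometry x)
    (hcorner : ∀ a, (1 - star x * x) * a * (1 - x * star x) = 0) :
    x ∈ unitBallExtremePoints A := by
  refine mem_unitBallExtremePoints_iff.mpr ⟨?_, fun u hadd hsub => ?_⟩
  · rw [norm_le_one_iff_star_mul_self_le_one,
      ← CStarAlgebra.norm_le_one_iff_of_nonneg _ (star_mul_self_nonneg x)]
    exact hx.isStarProjection_star_mul_self.norm_le
  have hup : u * (star x * x) = 0 := hx.mul_star_mul_self_eq_zero hadd hsub
  have hqu : x * star x * u = 0 := by
    simpa using congr(star $(hx.star.mul_star_mul_self_eq_zero (u := star u)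
      (by rwa [← star_add, norm_star]) (by rwa [← star_sub, norm_star])))
  calc u = (1 - x * star x) * u * (1 - star x * x) := by
        rw [show (1 - x * star x) * u * (1 - star x * x)
            = u - u * (star x * x) - x * star x * u + x * star x * u * (star x * x) by
            noncomm_ring,
          hup, hqu, zero_mul, sub_zero, sub_zero, add_zero]
    _ = star ((1 - star x * x) * star u * (1 - x * star x)) := by
        simp only [star_mul, star_sub, star_one, star_star, mul_assoc]
    _ = 0 := by rw [hcorner, star_zero]

theorem of_mem_unitBallExtremePoints (hx : x ∈ unitBallExtremePoints A) :
    IsPartialIsometry x := by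
  obtain ⟨hx₁, hext⟩ := mem_unitBallExtremePoints_iff.mp hx
  -- `x (1 ± b)` stays in the unit ball since `t (1 ± (1 - t) / 2)² ≤ 1` for `t ∈ [0, 1]`
  set b : A := (2⁻¹ : ℝ) • (1 - star x * x)
  have hadd : x + x * b = x * cfc (fun t : ℝ => 1 + 2⁻¹ * (1 - t)) (star x * x) := by
    rw [cfc_const_add _ _ (star x * x), cfc_const_mul _ _ (star x * x),
      cfc_sub (fun _ => 1) (fun t => t) (star x * x), cfc_const_one ℝ (star x * x),
      cfc_id' ℝ (star x * x), map_one, mul_add, mul_one]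
  have hsub : x - x * b = x * cfc (fun t : ℝ => 1 - 2⁻¹ * (1 - t)) (star x * x) := by
    rw [cfc_sub (fun _ => 1) _ (star x * x), cfc_const_one ℝ (star x * x),
      cfc_const_mul _ _ (star x * x), cfc_sub (fun _ => 1) (fun t => t) (star x * x),
      cfc_const_one ℝ (star x * x), cfc_id' ℝ (star x * x), mul_sub, mul_one]
  have hxb : x * b = 0 := hext _
    (hadd ▸ norm_mul_cfc_star_mul_self_le_one hx₁ (by fun_prop) fun t ⟨_, ht₁⟩ => by
      nlinarith [mul_nonneg (sq_nonneg (1 - t)) (by linarith : (0 : ℝ) ≤ 4 - t)])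
    (hsub ▸ norm_mul_cfc_star_mul_self_le_one hx₁ (by fun_prop) fun t ⟨ht₀, ht₁⟩ => by
      nlinarith [mul_nonneg (sub_nonneg.mpr ht₁) (by positivity : (0 : ℝ) ≤ t ^ 2 + 3 * t + 4)])
  rw [mul_smul_comm, smul_eq_zero_iff_right (by norm_num), mul_sub, mul_one,
    sub_eq_zero] at hxb
  rw [IsPartialIsometry, mul_assoc, ← hxb]

end IsPartialIsometry

theorem corner_eq_zero_of_mem_unitBallExtremePoints_of_norm_le_one {x a : A}
    (hx : x ∈ unitBallExtremePoints A)
    (ha : ‖(1 - star x * x) * a * (1 - x * star x)‖ ≤ 1) :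
    (1 - star x * x) * a * (1 - x * star x) = 0 := by
  have hpi : x * star x * x = x := IsPartialIsometry.of_mem_unitBallExtremePoints hx
  have he := (IsPartialIsometry.isStarProjection_star_mul_self hpi).one_sub
  obtain ⟨-, hext⟩ := mem_unitBallExtremePoints_iff.mp hx
  set d := (1 - star x * x) * a * (1 - x * star x)
  have hdx : d * x = 0 := by
    have : (1 - x * star x) * x = 0 := by rw [sub_mul, one_mul, hpi, sub_self]
    rw [mul_assoc, this, mul_zero]
  have hed : (1 - star x * x) * d = d := by
    simp only [d, ← mul_assoc, he.isIdempotentElem.eq]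
  have hdd : d * star d ≤ 1 - star x * x := by
    have hcomp := he.isSelfAdjoint.conjugate_le_conjugate
      (norm_le_one_iff_mul_star_self_le_one.mp ha)
    rwa [mul_one, he.isIdempotentElem.eq, ← mul_assoc, hed, mul_assoc,
      ← he.isSelfAdjoint.star_eq, ← star_mul, hed, he.isSelfAdjoint.star_eq] at hcomp
  have hle : star x * x + d * star d ≤ 1 := by
    simpa using add_le_add_right hdd (star x * x)
  have hxd : star x * star d = 0 := by simpa using congr(star $hdx)
  have hd : star d = 0 := hext (star d)
    (norm_add_le_one_of_star_mul_eq_zero hxd (by simpa using hle))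
    (by
      rw [sub_eq_add_neg]
      exact norm_add_le_one_of_star_mul_eq_zero (by simp [hxd]) (by simpa using hle))
  exact star_eq_zero.mp hd

theorem corner_eq_zero_of_mem_unitBallExtremePoints {x : A}
    (hx : x ∈ unitBallExtremePoints A) (a : A) :
    (1 - star x * x) * a * (1 - x * star x) = 0 := by
  set d := (1 - star x * x) * a * (1 - x * star x)
  by_contra hd
  have hscale :
      (1 - star x * x) * ((‖d‖ : ℂ)⁻¹ • a) * (1 - x * star x) = (‖d‖ : ℂ)⁻¹ • d := by
    rw [mul_smul_comm, smul_mul_assoc]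
  have h := corner_eq_zero_of_mem_unitBallExtremePoints_of_norm_le_one hx
    (hscale ▸ (norm_smul_inv_norm hd).le)
  rw [hscale, smul_eq_zero, inv_eq_zero, Complex.ofReal_eq_zero, norm_eq_zero] at h
  exact h.elim hd hd

end CStarAlgebra

section

variable {A : Type*} [CStarAlgebra A]

theorem mem_unitBallExtremePoints_iff_isPartialIsometry {x : A} :
    x ∈ unitBallExtremePoints A ↔
      IsPartialIsometry x ∧ ∀ a, (1 - star x * x) * a * (1 - x * star x) = 0 := by
  let := CStarAlgebra.spectralOrder A
  have := CStarAlgebra.spectralOrderedRing A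
  exact ⟨fun hx => ⟨.of_mem_unitBallExtremePoints hx,
    corner_eq_zero_of_mem_unitBallExtremePoints hx⟩,
    fun ⟨hx, hcorner⟩ => hx.mem_unitBallExtremePoints hcorner⟩

theorem isClosed_unitBallExtremePoints : IsClosed (unitBallExtremePoints A) := by
  have hset : unitBallExtremePoints A = {x | IsPartialIsometry x} ∩
      ⋂ a, {x | (1 - star x * x) * a * (1 - x * star x) = 0} := by
    ext x
    simp only [mem_unitBallExtremePoints_iff_isPartialIsometry, mem_inter_iff, mem_ofPred_eq,
      mem_iInter]
  rw [hset]
  exact (isClosed_eq (by fun_prop) continuous_id).inter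
    (isClosed_iInter fun a => isClosed_eq (by fun_prop) continuous_const)

end

/-- In a unital C*-algebra, the set of (linear) extreme points of the closed unit
ball is norm closed. -/
theorem extremePoints_closed {A : Type*} [NormedRing A] [StarRing A]
    [CStarRing A] [NormedAlgebra ℂ A] [CompleteSpace A] [StarModule ℂ A] :
    IsClosed {x : A | ‖x‖ ≤ 1 ∧
      ∀ y z : A, ‖y‖ ≤ 1 → ‖z‖ ≤ 1 → x = (2⁻¹ : ℝ) • (y + z) → y = x ∧ z = x} :=
  letI : CStarAlgebra A := {}
  isClosed_unitBallExtremePoints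
end

section
/- Let A be a unital C*-algebra and u ∈ A a unitary. Then u is a C*-extreme point of the closed unit ball of A: whenever u = ∑_{i=1}^k tᵢ* aᵢ tᵢ with ‖aᵢ‖ ≤ 1 and tᵢ invertible satisfying ∑ tᵢ*tᵢ = 1, each aᵢ is unitarily equivalent to u. -/
/-!
Write `dⱼ = aⱼ tⱼ - tⱼ u`. Expanding, `∑ dⱼ* dⱼ = ∑ tⱼ* aⱼ* aⱼ tⱼ - u* u ≤ ∑ tⱼ* tⱼ - 1 = 0`, so
every `dⱼ` vanishes: `aⱼ tⱼ = tⱼ u`, and likewise `aⱼ* tⱼ = tⱼ u*`. These two relations make `aⱼ`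
commute with `p = tⱼ tⱼ*`, hence with `p^(-1/2)`, and then `v = tⱼ* p^(-1/2)` (the unitary part of
the polar decomposition of `tⱼ*`) satisfies `aⱼ = v* u v`.
-/

open CFC

section CStarAlgebra

variable {A : Type*} [CStarAlgebra A] [PartialOrder A] [StarOrderedRing A]

lemma star_mul_self_le_one_of_norm_le_one {a : A} (ha : ‖a‖ ≤ 1) : star a * a ≤ 1 := by
  rw [← CStarAlgebra.norm_le_one_iff_of_nonneg _ (star_mul_self_nonneg a),
    CStarRing.norm_star_mul_self]
  exact mul_le_one₀ ha (norm_nonneg a) ha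

lemma mul_eq_mul_of_eq_sum_star_mul_mul {ι : Type*} {s : Finset ι} {u : A} {a t : ι → A}
    (hu : star u * u = 1) (ha : ∀ j ∈ s, ‖a j‖ ≤ 1) (ht : ∑ j ∈ s, star (t j) * t j = 1)
    (hsum : u = ∑ j ∈ s, star (t j) * a j * t j) : ∀ j ∈ s, a j * t j = t j * u := by
  set d : ι → A := fun j => a j * t j - t j * u
  have expand : ∀ j, star (d j) * d j = star (t j) * (star (a j) * a j) * t j
      - star (star (t j) * a j * t j) * u - star u * (star (t j) * a j * t j)
      + star u * (star (t j) * t j) * u := fun j => by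
    simp only [d, star_sub, star_mul, star_star]
    noncomm_ring
  have hdefect : ∑ j ∈ s, star (d j) * d j
      = ∑ j ∈ s, star (t j) * (star (a j) * a j) * t j - 1 := by
    simp only [expand, Finset.sum_add_distrib, Finset.sum_sub_distrib, ← Finset.sum_mul,
      ← Finset.mul_sum, ← star_sum, ← hsum, ht, mul_one, hu]
    abel
  have hcontr : ∑ j ∈ s, star (t j) * (star (a j) * a j) * t j ≤ 1 :=
    ht ▸ Finset.sum_le_sum fun j hj => by
      simpa using
        star_left_conjugate_le_conjugate (star_mul_self_le_one_of_norm_le_one (ha j hj)) (t j)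
  have hzero : ∑ j ∈ s, star (d j) * d j = 0 :=
    le_antisymm (hdefect ▸ sub_nonpos.mpr hcontr)
      (Finset.sum_nonneg fun j _ => star_mul_self_nonneg (d j))
  intro j hj
  have := (Finset.sum_eq_zero_iff_of_nonneg fun j _ => star_mul_self_nonneg (d j)).mp hzero j hj
  exact sub_eq_zero.mp (CStarRing.star_mul_self_eq_zero_iff _ |>.mp this)

lemma exists_unitary_conj_of_mul_eq_mul {a u t : A} (ht : IsUnit t) (h₁ : a * t = t * u)
    (h₂ : star a * t = t * star u) : ∃ v ∈ unitary A, a = star v * u * v := by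
  set p := t * star t
  have hp : IsStrictlyPositive p :=
    CStarAlgebra.isStrictlyPositive_iff_eq_mul_star_self.mpr ⟨t, ht, rfl⟩
  set r := p ^ (-(1 / 2) : ℝ)
  have hr : IsStrictlyPositive r := IsStrictlyPositive.rpow p _ hp
  have hrpr : r * p * r = 1 := by
    rw [← rpow_one p hp.nonneg, ← rpow_add hp.isUnit, ← rpow_add hp.isUnit]
    norm_num [rpow_zero p hp.nonneg]
  have hap : Commute a p := by
    have h₂' : star t * a = u * star t := by simpa using congrArg star h₂
    calc a * p = t * u * star t := by rw [← h₁]; noncomm_ring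
      _ = p * a := by rw [mul_assoc, ← h₂', ← mul_assoc]
  have har : Commute a r := (hap.symm.cfc_nnreal _).symm
  have hv : star (star t * r) = r * t := by rw [star_mul, hr.isSelfAdjoint.star_eq, star_star]
  refine ⟨star t * r, (ht.star.mul hr.isUnit).mem_unitary_of_star_mul_self ?_, ?_⟩
  · rw [hv, ← hrpr]
    simp only [p, mul_assoc]
  · calc a = a * (r * p * r) := by rw [hrpr, mul_one]
      _ = r * (a * p) * r := by simp only [← mul_assoc, har.eq]
      _ = star (star t * r) * u * (star t * r) := by simp only [hv, p, ← mul_assoc, h₁]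

end CStarAlgebra

/-- Every unitary in a unital C*-algebra is a C*-extreme point of the closed unit
ball. -/
theorem unitary_is_cstarExtreme {A : Type*} [NormedRing A] [StarRing A]
    [CStarRing A] [NormedAlgebra ℂ A] [CompleteSpace A] [StarModule ℂ A]
    (u : A) (hu : star u * u = 1) (hu' : u * star u = 1) :
    ∀ (k : ℕ) (a t : Fin k → A), (∀ i, ‖a i‖ ≤ 1) → (∀ i, IsUnit (t i)) →
      (∑ i, star (t i) * t i) = 1 → u = ∑ i, star (t i) * a i * t i →
      ∀ i, ∃ v : A, star v * v = 1 ∧ v * star v = 1 ∧ a i = star v * u * v := by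
  let : CStarAlgebra A := { }
  let : PartialOrder A := CStarAlgebra.spectralOrder A
  have : StarOrderedRing A := CStarAlgebra.spectralOrderedRing A
  intro k a t ha ht hsum heq i
  have h₁ : a i * t i = t i * u :=
    mul_eq_mul_of_eq_sum_star_mul_mul hu (fun j _ => ha j) hsum heq i (Finset.mem_univ i)
  have h₂ : star (a i) * t i = t i * star u :=
    mul_eq_mul_of_eq_sum_star_mul_mul (a := fun j => star (a j)) (by simpa using hu')
      (fun j _ => by simpa using ha j) hsum (by simp [heq, star_sum, mul_assoc]) i
      (Finset.mem_univ i)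
  obtain ⟨v, hv, hav⟩ := exists_unitary_conj_of_mul_eq_mul (ht i) h₁ h₂
  exact ⟨v, hv.1, hv.2, hav⟩
end
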